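/- Let 0 < α < 1, T = T_α, and let ζ ∈ (1/2, 1) and p ≥ 1 be such that T^p(ζ) = ζ and T^j(ζ) ∉ {0, 1/2} for all 0 ≤ j < p. Set γ = ∏_{j=0}^{p−1} T′(T^j(ζ)). Then γ > 1, and for every Borel measure μ on [0,1] such that lim_{δ→0⁺} μ((ζ−a, ζ+b))/(a+b) = h₂ > 0 uniformly as a, b → 0⁺ (e.g. μ absolutely continuous with density continuous and positive at ζ), one has, for every integer κ ≥ 0, lim_{δ→0⁺} μ( ⋂_{ℓ=0}^{κ} T^{−ℓp}(B_δ(ζ)) \ T^{−(κ+1)p}(B_δ(ζ)) ) / μ(B_δ(ζ)) = γ^{−κ}(1 − γ^{−1}), where B_δ(ζ) = (ζ−δ, ζ+δ). -/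

import Mathlib

open Set MeasureTheory Filter

/-- The Liverani–Saussol–Vaienti (Manneville–Pomeau) map
`T_α(x) = x(1 + 2^α x^α)` for `x < 1/2` and `T_α(x) = 2x − 1` otherwise. -/
noncomputable def LSV (α : ℝ) (x : ℝ) : ℝ :=
  if x < 1 / 2 then x * (1 + (2 : ℝ) ^ α * x ^ α) else 2 * x - 1

lemma LSV_right_eq {α x : ℝ} (hx : 1 / 2 < x) : LSV α =ᶠ[nhds x] fun y => 2 * y - 1 := by
  filter_upwards [Ioi_mem_nhds hx] with y hy
  have : ¬ y < 1 / 2 := not_lt.2 (le_of_lt (mem_Ioi.1 hy))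
  simp only [LSV, if_neg this]

lemma LSV_left_eq {α x : ℝ} (hx : x < 1 / 2) : LSV α =ᶠ[nhds x] fun y => y * (1 + (2:ℝ) ^ α * y ^ α) := by
  filter_upwards [Iio_mem_nhds hx] with y hy
  simp only [LSV, if_pos (mem_Iio.1 hy)]

lemma hasDerivAt_LSV_right {α x : ℝ} (hx : 1 / 2 < x) : HasDerivAt (LSV α) 2 x := by
  have h : HasDerivAt (fun y : ℝ => 2 * y - 1) 2 x := by
    simpa using ((hasDerivAt_id x).const_mul (2:ℝ)).sub_const 1
  exact h.congr_of_eventuallyEq (LSV_right_eq hx)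

lemma hasDerivAt_LSV_left {α x : ℝ} (hx0 : 0 < x) (hx : x < 1 / 2) :
    HasDerivAt (LSV α) (1 + (1 + α) * (2:ℝ) ^ α * x ^ α) x := by
  have hr : HasDerivAt (fun y : ℝ => y ^ α) (α * x ^ (α - 1)) x :=
    Real.hasDerivAt_rpow_const (Or.inl hx0.ne')
  have h1 : HasDerivAt (fun y : ℝ => 1 + (2:ℝ) ^ α * y ^ α) ((2:ℝ) ^ α * (α * x ^ (α - 1))) x :=
    (hr.const_mul _).const_add 1
  have h : HasDerivAt (fun y : ℝ => y * (1 + (2:ℝ) ^ α * y ^ α))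
      (1 * (1 + (2:ℝ) ^ α * x ^ α) + x * ((2:ℝ) ^ α * (α * x ^ (α - 1)))) x :=
    (hasDerivAt_id x).mul h1
  have hxx : x * x ^ (α - 1) = x ^ α := by
    nth_rewrite 1 [← Real.rpow_one x]
    rw [← Real.rpow_add hx0]; ring_nf
  have h' : HasDerivAt (fun y : ℝ => y * (1 + (2:ℝ) ^ α * y ^ α))
      (1 + (1 + α) * (2:ℝ) ^ α * x ^ α) x := by
    convert h using 1
    show 1 + (1 + α) * (2:ℝ) ^ α * x ^ α = 1 * (1 + (2:ℝ) ^ α * x ^ α) + x * ((2:ℝ) ^ α * (α * x ^ (α - 1)))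
    rw [mul_comm ((2:ℝ)^α) (α * x ^ (α-1)), mul_assoc α (x ^ (α-1)) ((2:ℝ)^α),
      ← mul_assoc x α _, mul_comm x α, mul_assoc α x _, ← mul_assoc x (x ^ (α-1)) _, hxx]
    ring
  exact h'.congr_of_eventuallyEq (LSV_left_eq hx)

lemma continuousAt_LSV_left {α x : ℝ} (hx0 : 0 < x) (hx : x < 1 / 2) (hα0 : 0 < α) :
    ContinuousAt (LSV α) x :=
  (hasDerivAt_LSV_left (α := α) hx0 hx).continuousAt

lemma LSV_pos {α x : ℝ} (hα0 : 0 < α) (hx0 : 0 < x) (hx : x ≠ 1 / 2) : 0 < LSV α x := by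
  rcases lt_or_gt_of_ne hx with h | h
  · rw [LSV, if_pos h]
    have : (0:ℝ) < 1 + (2:ℝ) ^ α * x ^ α := by positivity
    positivity
  · rw [LSV, if_neg (not_lt.2 h.le)]; linarith

-- expansion for the left branch
lemma phi_expand {α x y : ℝ} (hα0 : 0 < α) (hx : 0 ≤ x) (hxy : x ≤ y) :
    y - x ≤ y * (1 + (2:ℝ) ^ α * y ^ α) - x * (1 + (2:ℝ) ^ α * x ^ α) := by
  have hy : 0 ≤ y := hx.trans hxy
  have h1 : x * x ^ α ≤ y * y ^ α :=
    mul_le_mul hxy (Real.rpow_le_rpow hx hxy (le_of_lt hα0)) (Real.rpow_nonneg hx α) hy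
  have h2 : (0:ℝ) ≤ (2:ℝ) ^ α := by positivity
  nlinarith [mul_le_mul_of_nonneg_left h1 h2]

open Classical in
noncomputable def leftSeq (F : ℝ → ℝ) (ζ δ : ℝ) : ℕ → ℝ
  | 0 => ζ - δ
  | j+1 => if h : ∃ x ∈ Set.Ico (ζ-δ) ζ, F x = leftSeq F ζ δ j ∧ ζ - x ≤ ζ - leftSeq F ζ δ j
      then h.choose else ζ - δ

open Classical in
noncomputable def rightSeq (F : ℝ → ℝ) (ζ δ : ℝ) : ℕ → ℝ
  | 0 => ζ + δ
  | j+1 => if h : ∃ x ∈ Set.Ioc ζ (ζ+δ), F x = rightSeq F ζ δ j ∧ x - ζ ≤ rightSeq F ζ δ j - ζ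
      then h.choose else ζ + δ

lemma iInter_iterate_succ {β : Type*} (g : β → β) (s : Set β) (j : ℕ) :
    (⋂ ℓ ∈ Finset.range (j+2), g^[ℓ] ⁻¹' s) = s ∩ g ⁻¹' (⋂ ℓ ∈ Finset.range (j+1), g^[ℓ] ⁻¹' s) := by
  ext x
  simp only [Set.mem_iInter, Finset.mem_range, Set.mem_inter_iff, Set.mem_preimage]
  constructor
  · intro h
    refine ⟨by simpa using h 0 (by omega), fun ℓ hℓ => ?_⟩
    have := h (ℓ+1) (by omega)
    rwa [Function.iterate_succ_apply] at this
  · rintro ⟨h0, h⟩ ℓ hℓ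
    cases ℓ with
    | zero => simpa using h0
    | succ n => rw [Function.iterate_succ_apply]; exact h n (by omega)

section pack
variable {F : ℝ → ℝ} {ζ ε δ : ℝ}

lemma ball_of_Icc (hδ : 0 < δ) (hδε : δ < ε) {a : ℝ} (h1 : ζ - δ ≤ a) (h2 : a ≤ ζ + δ) :
    |a - ζ| < ε := by
  rw [abs_sub_lt_iff]; constructor <;> linarith

lemma preL (hδ : 0 < δ) (hδε : δ < ε) (hFζ : F ζ = ζ)
    (hexp : ∀ x y, |x - ζ| < ε → |y - ζ| < ε → x ≤ y → y - x ≤ F y - F x)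
    (hFc : ∀ x, |x - ζ| < ε → ContinuousAt F x)
    {y : ℝ} (hy : y ∈ Ico (ζ-δ) ζ) :
    ∃ x ∈ Ico (ζ-δ) ζ, F x = y ∧ ζ - x ≤ ζ - y := by
  have hc : ContinuousOn F (Icc (ζ-δ) ζ) := fun x hx =>
    (hFc x (ball_of_Icc hδ hδε hx.1 (by linarith [hx.2]))).continuousWithinAt
  have hb1 : |ζ - δ - ζ| < ε := ball_of_Icc hδ hδε le_rfl (by linarith)
  have hbζ : |ζ - ζ| < ε := ball_of_Icc hδ hδε (by linarith) (by linarith)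
  have h1 : F (ζ-δ) ≤ ζ - δ := by
    have := hexp (ζ-δ) ζ hb1 hbζ (by linarith) 
    rw [hFζ] at this; linarith
  have hmem : y ∈ Icc (F (ζ-δ)) (F ζ) := ⟨le_trans h1 hy.1, by rw [hFζ]; exact hy.2.le⟩
  obtain ⟨x, hxIcc, hxy⟩ := intermediate_value_Icc (by linarith : ζ-δ ≤ ζ) hc hmem
  have hxζ : x ≠ ζ := by
    intro h; rw [h, hFζ] at hxy; exact absurd hxy.symm (ne_of_lt hy.2)
  have hxball : |x - ζ| < ε := ball_of_Icc hδ hδε hxIcc.1 (by linarith [hxIcc.2])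
  have hcontr : ζ - x ≤ ζ - y := by
    have := hexp x ζ hxball hbζ hxIcc.2
    rw [hFζ, hxy] at this; linarith
  exact ⟨x, ⟨hxIcc.1, lt_of_le_of_ne hxIcc.2 hxζ⟩, hxy, hcontr⟩

lemma preR (hδ : 0 < δ) (hδε : δ < ε) (hFζ : F ζ = ζ)
    (hexp : ∀ x y, |x - ζ| < ε → |y - ζ| < ε → x ≤ y → y - x ≤ F y - F x)
    (hFc : ∀ x, |x - ζ| < ε → ContinuousAt F x)
    {y : ℝ} (hy : y ∈ Ioc ζ (ζ+δ)) :
    ∃ x ∈ Ioc ζ (ζ+δ), F x = y ∧ x - ζ ≤ y - ζ := by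
  have hc : ContinuousOn F (Icc ζ (ζ+δ)) := fun x hx =>
    (hFc x (ball_of_Icc hδ hδε (by linarith [hx.1]) hx.2)).continuousWithinAt
  have hb1 : |ζ + δ - ζ| < ε := ball_of_Icc hδ hδε (by linarith) le_rfl
  have hbζ : |ζ - ζ| < ε := ball_of_Icc hδ hδε (by linarith) (by linarith)
  have h1 : ζ + δ ≤ F (ζ+δ) := by
    have := hexp ζ (ζ+δ) hbζ hb1 (by linarith)
    rw [hFζ] at this; linarith
  have hmem : y ∈ Icc (F ζ) (F (ζ+δ)) := ⟨by rw [hFζ]; exact hy.1.le, le_trans hy.2 h1⟩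
  obtain ⟨x, hxIcc, hxy⟩ := intermediate_value_Icc (by linarith : ζ ≤ ζ+δ) hc hmem
  have hxζ : x ≠ ζ := by
    intro h; rw [h, hFζ] at hxy; exact absurd hxy (ne_of_lt hy.1)
  have hxball : |x - ζ| < ε := ball_of_Icc hδ hδε (by linarith [hxIcc.1]) hxIcc.2
  have hcontr : x - ζ ≤ y - ζ := by
    have := hexp ζ x hbζ hxball hxIcc.1
    rw [hFζ, hxy] at this; linarith
  exact ⟨x, ⟨lt_of_le_of_ne hxIcc.1 (Ne.symm hxζ), hxIcc.2⟩, hxy, hcontr⟩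

lemma seq_pack (hδ : 0 < δ) (hδε : δ < ε) (hFζ : F ζ = ζ)
    (hexp : ∀ x y, |x - ζ| < ε → |y - ζ| < ε → x ≤ y → y - x ≤ F y - F x)
    (hFc : ∀ x, |x - ζ| < ε → ContinuousAt F x) :
    ∀ j, leftSeq F ζ δ j ∈ Ico (ζ-δ) ζ ∧ rightSeq F ζ δ j ∈ Ioc ζ (ζ+δ) ∧
      F^[j] (leftSeq F ζ δ j) = ζ-δ ∧ F^[j] (rightSeq F ζ δ j) = ζ+δ ∧
      (⋂ ℓ ∈ Finset.range (j+1), F^[ℓ] ⁻¹' Ioo (ζ-δ) (ζ+δ))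
        = Ioo (leftSeq F ζ δ j) (rightSeq F ζ δ j) := by
  have hmono : ∀ x y, |x - ζ| < ε → |y - ζ| < ε → x < y → F x < F y := by
    intro x y hx hy hxy
    have := hexp x y hx hy hxy.le; linarith
  intro j
  induction j with
  | zero =>
    have e0 : leftSeq F ζ δ 0 = ζ - δ := rfl
    have e0' : rightSeq F ζ δ 0 = ζ + δ := rfl
    rw [e0, e0']
    refine ⟨⟨le_rfl, by linarith⟩, ⟨by linarith, le_rfl⟩, by simp, by simp, ?_⟩
    simp
  | succ j ih =>
    obtain ⟨hA, hB, hFA, hFB, hS⟩ := ih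
    have hexL := preL hδ hδε hFζ hexp hFc hA
    have hexR := preR hδ hδε hFζ hexp hFc hB
    have eL : leftSeq F ζ δ (j+1) = hexL.choose := by rw [leftSeq, dif_pos hexL]
    have eR : rightSeq F ζ δ (j+1) = hexR.choose := by rw [rightSeq, dif_pos hexR]
    obtain ⟨hmemL, hFxL, hcontrL⟩ := hexL.choose_spec
    obtain ⟨hmemR, hFxR, hcontrR⟩ := hexR.choose_spec
    rw [eL, eR]
    refine ⟨hmemL, hmemR, ?_, ?_, ?_⟩
    · rw [Function.iterate_succ_apply, hFxL, hFA]
    · rw [Function.iterate_succ_apply, hFxR, hFB]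
    · rw [iInter_iterate_succ, hS]
      have ballL : |hexL.choose - ζ| < ε :=
        ball_of_Icc hδ hδε hmemL.1 (by linarith [hmemL.2])
      have ballR : |hexR.choose - ζ| < ε :=
        ball_of_Icc hδ hδε (by linarith [hmemR.1]) hmemR.2
      ext x
      simp only [Set.mem_inter_iff, Set.mem_preimage, Set.mem_Ioo]
      constructor
      · rintro ⟨⟨hx1, hx2⟩, hFx1, hFx2⟩
        have hxball : |x - ζ| < ε := ball_of_Icc hδ hδε hx1.le hx2.le
        constructor
        · by_contra h
          push_neg at h
          rcases eq_or_lt_of_le h with h' | h'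
          · rw [h', hFxL] at hFx1; exact lt_irrefl _ hFx1
          · have := hmono x _ hxball ballL h'
            rw [hFxL] at this; linarith
        · by_contra h
          push_neg at h
          rcases eq_or_lt_of_le h with h' | h'
          · rw [← h', hFxR] at hFx2; exact lt_irrefl _ hFx2
          · have := hmono _ x ballR hxball h'
            rw [hFxR] at this; linarith
      · rintro ⟨hx1, hx2⟩
        have hs1 : ζ - δ < x := lt_of_le_of_lt hmemL.1 hx1
        have hs2 : x < ζ + δ := lt_of_lt_of_le hx2 hmemR.2
        have hxball : |x - ζ| < ε := ball_of_Icc hδ hδε hs1.le hs2.le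
        refine ⟨⟨hs1, hs2⟩, ?_, ?_⟩
        · have := hmono _ x ballL hxball hx1; rwa [hFxL] at this
        · have := hmono x _ hxball ballR hx2; rwa [hFxR] at this
end pack

lemma frac_algebra (a b s t : ℝ) (hs : s ≠ 0) (ht : t ≠ 0) :
    a / s / (b / t) * (s / t) = a / b := by
  rcases eq_or_ne b 0 with rfl | hb
  · simp
  · field_simp

set_option maxHeartbeats 2000000 in
lemma main_tendsto {F : ℝ → ℝ} {ζ ε γ : ℝ} (hε : 0 < ε) (hγ1 : 1 < γ) (hFζ : F ζ = ζ)
    (hexp : ∀ x y, |x - ζ| < ε → |y - ζ| < ε → x ≤ y → y - x ≤ F y - F x)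
    (hFc : ∀ x, |x - ζ| < ε → ContinuousAt F x)
    (hFd : HasDerivAt F γ ζ)
    (μ : Measure ℝ) (h₂ : ℝ) (h₂pos : 0 < h₂)
    (hμ : Tendsto (fun ab : ℝ × ℝ =>
          (μ (Ioo (ζ - ab.1) (ζ + ab.2))).toReal / (ab.1 + ab.2))
        ((nhdsWithin 0 (Ioi 0)) ×ˢ (nhdsWithin 0 (Ioi 0))) (nhds h₂)) (κ : ℕ) :
    Tendsto (fun δ : ℝ =>
        (μ ((⋂ ℓ ∈ Finset.range (κ + 1), F^[ℓ] ⁻¹' Ioo (ζ - δ) (ζ + δ)) \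
            F^[κ+1] ⁻¹' Ioo (ζ - δ) (ζ + δ))).toReal /
          (μ (Ioo (ζ - δ) (ζ + δ))).toReal)
      (nhdsWithin 0 (Ioi 0)) (nhds (γ⁻¹ ^ κ * (1 - γ⁻¹))) := by
  have hγ0 : (0:ℝ) < γ := lt_trans one_pos hγ1
  have hev : ∀ᶠ δ in nhdsWithin (0:ℝ) (Ioi 0), δ ∈ Ioo (0:ℝ) ε :=
    Ioo_mem_nhdsGT_of_mem ⟨le_rfl, hε⟩
  have hpack := fun (δ : ℝ) (h : δ ∈ Ioo (0:ℝ) ε) =>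
    seq_pack (ε := ε) h.1 h.2 hFζ hexp hFc
  -- limits of the endpoints
  have hAlim : ∀ j, Tendsto (fun δ => (ζ - leftSeq F ζ δ j) / δ)
      (nhdsWithin 0 (Ioi 0)) (nhds (γ⁻¹ ^ j)) := by
    intro j
    have hslope := hasDerivAt_iff_tendsto_slope.1 (HasDerivAt.iterate ζ hFd hFζ j)
    have hAt : Tendsto (fun δ => leftSeq F ζ δ j) (nhdsWithin (0:ℝ) (Ioi 0))
        (nhdsWithin ζ {ζ}ᶜ) := by
      apply tendsto_nhdsWithin_of_tendsto_nhds_of_eventually_within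
      · apply tendsto_of_tendsto_of_tendsto_of_le_of_le' (g := fun δ => ζ - δ)
          (h := fun _ => ζ)
        · have : Tendsto (fun δ : ℝ => ζ - δ) (nhds 0) (nhds (ζ - 0)) :=
            (continuous_const.sub continuous_id).tendsto 0
          simpa using this.mono_left nhdsWithin_le_nhds
        · exact tendsto_const_nhds
        · filter_upwards [hev] with δ hδ
          exact (hpack δ hδ j).1.1
        · filter_upwards [hev] with δ hδ
          exact ((hpack δ hδ j).1.2).le
      · filter_upwards [hev] with δ hδ
        exact ne_of_lt (hpack δ hδ j).1.2
    have hcomp := hslope.comp hAt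
    have hq : Tendsto (fun δ => δ / (ζ - leftSeq F ζ δ j)) (nhdsWithin (0:ℝ) (Ioi 0))
        (nhds (γ ^ j)) := by
      apply hcomp.congr'
      filter_upwards [hev] with δ hδ
      show slope (F^[j]) ζ (leftSeq F ζ δ j) = _
      rw [slope_def_field, Function.iterate_fixed hFζ j, (hpack δ hδ j).2.2.1,
        show ζ - δ - ζ = -δ by ring, show leftSeq F ζ δ j - ζ = -(ζ - leftSeq F ζ δ j) by ring,
        neg_div_neg_eq]
    have := hq.inv₀ (by positivity)
    rw [inv_pow]
    apply this.congr'
    filter_upwards [hev] with δ hδ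
    rw [inv_div]
  have hBlim : ∀ j, Tendsto (fun δ => (rightSeq F ζ δ j - ζ) / δ)
      (nhdsWithin 0 (Ioi 0)) (nhds (γ⁻¹ ^ j)) := by
    intro j
    have hslope := hasDerivAt_iff_tendsto_slope.1 (HasDerivAt.iterate ζ hFd hFζ j)
    have hBt : Tendsto (fun δ => rightSeq F ζ δ j) (nhdsWithin (0:ℝ) (Ioi 0))
        (nhdsWithin ζ {ζ}ᶜ) := by
      apply tendsto_nhdsWithin_of_tendsto_nhds_of_eventually_within
      · apply tendsto_of_tendsto_of_tendsto_of_le_of_le' (g := fun _ => ζ)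
          (h := fun δ => ζ + δ)
        · exact tendsto_const_nhds
        · have : Tendsto (fun δ : ℝ => ζ + δ) (nhds 0) (nhds (ζ + 0)) :=
            (continuous_const.add continuous_id).tendsto 0
          simpa using this.mono_left nhdsWithin_le_nhds
        · filter_upwards [hev] with δ hδ
          exact ((hpack δ hδ j).2.1.1).le
        · filter_upwards [hev] with δ hδ
          exact (hpack δ hδ j).2.1.2
      · filter_upwards [hev] with δ hδ
        exact (ne_of_lt (hpack δ hδ j).2.1.1).symm
    have hcomp := hslope.comp hBt
    have hq : Tendsto (fun δ => δ / (rightSeq F ζ δ j - ζ)) (nhdsWithin (0:ℝ) (Ioi 0))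
        (nhds (γ ^ j)) := by
      apply hcomp.congr'
      filter_upwards [hev] with δ hδ
      show slope (F^[j]) ζ (rightSeq F ζ δ j) = _
      rw [slope_def_field, Function.iterate_fixed hFζ j, (hpack δ hδ j).2.2.2.1,
        show ζ + δ - ζ = δ by ring]
    have := hq.inv₀ (by positivity)
    rw [inv_pow]
    apply this.congr'
    filter_upwards [hev] with δ hδ
    rw [inv_div]
  -- diagonal limit of the density
  have hid : Tendsto (fun δ : ℝ => (δ, δ)) (nhdsWithin (0:ℝ) (Ioi 0))
      ((nhdsWithin (0:ℝ) (Ioi 0)) ×ˢ (nhdsWithin (0:ℝ) (Ioi 0))) :=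
    Filter.Tendsto.prodMk tendsto_id tendsto_id
  have hR2comp := hμ.comp hid
  have hR2 : Tendsto (fun δ : ℝ => (μ (Ioo (ζ - δ) (ζ + δ))).toReal / (δ + δ))
      (nhdsWithin 0 (Ioi 0)) (nhds h₂) := hR2comp.congr (fun δ => rfl)
  -- eventual finiteness and positivity of the measure of the balls
  have hfin : ∀ᶠ δ in nhdsWithin (0:ℝ) (Ioi 0),
      μ (Ioo (ζ - δ) (ζ + δ)) ≠ ⊤ ∧ 0 < (μ (Ioo (ζ - δ) (ζ + δ))).toReal := by
    filter_upwards [hev, hR2.eventually (eventually_gt_nhds (half_lt_self h₂pos))] with δ hδ h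
    have htr : 0 < (μ (Ioo (ζ - δ) (ζ + δ))).toReal := by
      by_contra hc
      push_neg at hc
      have : (μ (Ioo (ζ - δ) (ζ + δ))).toReal = 0 := le_antisymm hc ENNReal.toReal_nonneg
      rw [this] at h
      have : (0:ℝ) < h₂ / 2 := by linarith
      simp only [zero_div] at h
      linarith
    refine ⟨fun hc => ?_, htr⟩
    rw [hc] at htr
    simp at htr
  -- ratio limit for each level j
  have hratio : ∀ j, Tendsto (fun δ =>
      (μ (Ioo (leftSeq F ζ δ j) (rightSeq F ζ δ j))).toReal /
        (μ (Ioo (ζ - δ) (ζ + δ))).toReal)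
      (nhdsWithin (0:ℝ) (Ioi 0)) (nhds (γ⁻¹ ^ j)) := by
    intro j
    have htu : Tendsto (fun δ => ζ - leftSeq F ζ δ j) (nhdsWithin (0:ℝ) (Ioi 0))
        (nhdsWithin (0:ℝ) (Ioi 0)) := by
      apply tendsto_nhdsWithin_of_tendsto_nhds_of_eventually_within
      · apply tendsto_of_tendsto_of_tendsto_of_le_of_le' (g := fun _ => (0:ℝ))
          (h := fun δ => δ)
        · exact tendsto_const_nhds
        · exact tendsto_id.mono_right nhdsWithin_le_nhds
        · filter_upwards [hev] with δ hδ
          have := (hpack δ hδ j).1.2; linarith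
        · filter_upwards [hev] with δ hδ
          have := (hpack δ hδ j).1.1; linarith
      · filter_upwards [hev] with δ hδ
        have := (hpack δ hδ j).1.2
        simp only [mem_Ioi]; linarith
    have htv : Tendsto (fun δ => rightSeq F ζ δ j - ζ) (nhdsWithin (0:ℝ) (Ioi 0))
        (nhdsWithin (0:ℝ) (Ioi 0)) := by
      apply tendsto_nhdsWithin_of_tendsto_nhds_of_eventually_within
      · apply tendsto_of_tendsto_of_tendsto_of_le_of_le' (g := fun _ => (0:ℝ))
          (h := fun δ => δ)
        · exact tendsto_const_nhds
        · exact tendsto_id.mono_right nhdsWithin_le_nhds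
        · filter_upwards [hev] with δ hδ
          have := (hpack δ hδ j).2.1.1; linarith
        · filter_upwards [hev] with δ hδ
          have := (hpack δ hδ j).2.1.2; linarith
      · filter_upwards [hev] with δ hδ
        have := (hpack δ hδ j).2.1.1
        simp only [mem_Ioi]; linarith
    have huv : Tendsto (fun δ : ℝ => (ζ - leftSeq F ζ δ j, rightSeq F ζ δ j - ζ))
        (nhdsWithin (0:ℝ) (Ioi 0))
        ((nhdsWithin (0:ℝ) (Ioi 0)) ×ˢ (nhdsWithin (0:ℝ) (Ioi 0))) :=
      Filter.Tendsto.prodMk htu htv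
    have hR1comp := hμ.comp huv
    have hR1 : Tendsto (fun δ : ℝ =>
        (μ (Ioo (ζ - (ζ - leftSeq F ζ δ j)) (ζ + (rightSeq F ζ δ j - ζ)))).toReal /
          ((ζ - leftSeq F ζ δ j) + (rightSeq F ζ δ j - ζ)))
        (nhdsWithin 0 (Ioi 0)) (nhds h₂) := hR1comp.congr (fun δ => rfl)
    have hfrac : Tendsto (fun δ : ℝ =>
        ((ζ - leftSeq F ζ δ j) + (rightSeq F ζ δ j - ζ)) / (δ + δ))
        (nhdsWithin 0 (Ioi 0)) (nhds (γ⁻¹ ^ j)) := by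
      have h1 := ((hAlim j).add (hBlim j)).div_const 2
      have h2 : (γ⁻¹ ^ j + γ⁻¹ ^ j) / 2 = γ⁻¹ ^ j := by ring
      rw [h2] at h1
      apply h1.congr'
      filter_upwards [hev] with δ hδ
      rw [← add_div, div_div, mul_two]
    have hmain := (hR1.div hR2 (ne_of_gt h₂pos)).mul hfrac
    rw [div_self (ne_of_gt h₂pos), one_mul] at hmain
    apply hmain.congr'
    filter_upwards [hev] with δ hδ
    have hu : 0 < ζ - leftSeq F ζ δ j := by have := (hpack δ hδ j).1.2; linarith
    have hv : 0 < rightSeq F ζ δ j - ζ := by have := (hpack δ hδ j).2.1.1; linarith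
    have e1 : ζ - (ζ - leftSeq F ζ δ j) = leftSeq F ζ δ j := by ring
    have e2 : ζ + (rightSeq F ζ δ j - ζ) = rightSeq F ζ δ j := by ring
    simp only [Pi.div_apply]
    rw [e1, e2, frac_algebra _ _ _ _ (ne_of_gt (by linarith)) (ne_of_gt (by linarith [hδ.1]))]
  -- final assembly
  have hfinal := (hratio κ).sub (hratio (κ+1))
  have hval : γ⁻¹ ^ κ * (1 - γ⁻¹) = γ⁻¹ ^ κ - γ⁻¹ ^ (κ+1) := by ring
  rw [hval]
  apply hfinal.congr'
  filter_upwards [hev, hfin] with δ hδ hf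
  obtain ⟨hA, hB, hFA, hFB, hS⟩ := hpack δ hδ κ
  obtain ⟨hA', hB', hFA', hFB', hS'⟩ := hpack δ hδ (κ+1)
  rw [Finset.range_add_one, Finset.set_biInter_insert] at hS'
  -- hS' : F^[κ+1]⁻¹ Ioo ∩ (⋂ range (κ+1)) = Ioo A' B'
  rw [hS] at hS'
  have hsub : Ioo (leftSeq F ζ δ (κ+1)) (rightSeq F ζ δ (κ+1))
      ⊆ Ioo (leftSeq F ζ δ κ) (rightSeq F ζ δ κ) := by
    rw [← hS']; exact inter_subset_right
  have hdiff : (⋂ ℓ ∈ Finset.range (κ + 1), F^[ℓ] ⁻¹' Ioo (ζ - δ) (ζ + δ)) \ (F^[κ+1] ⁻¹' Ioo (ζ - δ) (ζ + δ))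
      = Ioo (leftSeq F ζ δ κ) (rightSeq F ζ δ κ)
        \ Ioo (leftSeq F ζ δ (κ+1)) (rightSeq F ζ δ (κ+1)) := by
    rw [hS, ← hS', ← Set.diff_inter_self_eq_diff]
  have hsubδ : Ioo (leftSeq F ζ δ κ) (rightSeq F ζ δ κ) ⊆ Ioo (ζ - δ) (ζ + δ) :=
    Ioo_subset_Ioo hA.1 hB.2
  have hfin1 : μ (Ioo (leftSeq F ζ δ κ) (rightSeq F ζ δ κ)) ≠ ⊤ :=
    ne_top_of_le_ne_top hf.1 (measure_mono hsubδ)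
  have hfin2 : μ (Ioo (leftSeq F ζ δ (κ+1)) (rightSeq F ζ δ (κ+1))) ≠ ⊤ :=
    ne_top_of_le_ne_top hfin1 (measure_mono hsub)
  rw [hdiff, measure_diff hsub measurableSet_Ioo.nullMeasurableSet hfin2,
    ENNReal.toReal_sub_of_le (measure_mono hsub) hfin1, sub_div]

theorem LSV_periodic_geometric_cluster {α : ℝ} (hα0 : 0 < α) (hα1 : α < 1)
    (ζ : ℝ) (hζ : ζ ∈ Ioo (1 / 2 : ℝ) 1) (p : ℕ) (hp : 1 ≤ p)
    (hper : (LSV α)^[p] ζ = ζ)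
    (hnot : ∀ j, j < p → (LSV α)^[j] ζ ≠ 0 ∧ (LSV α)^[j] ζ ≠ 1 / 2)
    (γ : ℝ) (hγ : γ = ∏ j ∈ Finset.range p, deriv (LSV α) ((LSV α)^[j] ζ)) :
    1 < γ ∧
    ∀ (μ : Measure ℝ) (h₂ : ℝ), 0 < h₂ →
      Tendsto (fun ab : ℝ × ℝ =>
          (μ (Ioo (ζ - ab.1) (ζ + ab.2))).toReal / (ab.1 + ab.2))
        ((nhdsWithin 0 (Ioi 0)) ×ˢ (nhdsWithin 0 (Ioi 0))) (nhds h₂) →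
      ∀ κ : ℕ,
        Tendsto (fun δ : ℝ =>
            (μ ((⋂ ℓ ∈ Finset.range (κ + 1),
                  (LSV α)^[ℓ * p] ⁻¹' Ioo (ζ - δ) (ζ + δ)) \
                (LSV α)^[(κ + 1) * p] ⁻¹' Ioo (ζ - δ) (ζ + δ))).toReal /
              (μ (Ioo (ζ - δ) (ζ + δ))).toReal)
          (nhdsWithin 0 (Ioi 0)) (nhds (γ⁻¹ ^ κ * (1 - γ⁻¹))) := by
  have hp1 : 1 ≤ p := hp
  set f := LSV α with hfdef
  -- orbit positivity
  have horb0 : ∀ j, j ≤ p → 0 < f^[j] ζ := by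
    intro j
    induction j with
    | zero => intro _; simpa using lt_trans (by norm_num) hζ.1
    | succ n ih =>
      intro hn
      have h1 : 0 < f^[n] ζ := ih (by omega)
      rw [Function.iterate_succ_apply']
      exact LSV_pos hα0 h1 (hnot n (by omega)).2
  -- branch dichotomy along the orbit
  have hbr : ∀ j, j < p → f^[j] ζ ∈ Ioo (0:ℝ) (1/2) ∨ f^[j] ζ ∈ Ioi (1/2 : ℝ) := by
    intro j hj
    rcases lt_or_gt_of_ne (hnot j hj).2 with h | h
    · exact Or.inl ⟨horb0 j hj.le, h⟩
    · exact Or.inr h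
  -- derivatives at orbit points
  have hD : ∀ j, j < p → HasDerivAt f (deriv f (f^[j] ζ)) (f^[j] ζ) ∧ 1 < deriv f (f^[j] ζ) := by
    intro j hj
    rcases hbr j hj with h | h
    · have hd := hasDerivAt_LSV_left (α := α) h.1 h.2
      refine ⟨hd.deriv ▸ hd, ?_⟩
      rw [hd.deriv]
      have h1 : (0:ℝ) < (1 + α) * (2:ℝ) ^ α * (f^[j] ζ) ^ α := by
        have := h.1; positivity
      linarith
    · have hd := hasDerivAt_LSV_right (α := α) h
      refine ⟨hd.deriv ▸ hd, ?_⟩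
      rw [hd.deriv]; norm_num
  -- derivative of iterates at ζ
  have hFn : ∀ n, n ≤ p →
      HasDerivAt (f^[n]) (∏ j ∈ Finset.range n, deriv f (f^[j] ζ)) ζ := by
    intro n
    induction n with
    | zero => intro _; simpa using hasDerivAt_id ζ
    | succ n ih =>
      intro hn
      have h1 := ih (by omega)
      have h2 := (hD n (by omega)).1
      have h3 := h2.comp ζ h1
      rw [Finset.prod_range_succ, mul_comm]
      rw [Function.iterate_succ']
      exact h3
  have hγ1 : 1 < γ := by
    rw [hγ]
    have := Finset.prod_lt_prod_of_nonempty (f := fun _ : ℕ => (1:ℝ))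
      (g := fun j => deriv f (f^[j] ζ)) (s := Finset.range p)
      (fun i _ => one_pos) (fun i hi => (hD i (Finset.mem_range.1 hi)).2)
      (Finset.nonempty_range_iff.mpr (by omega))
    simpa using this
  refine ⟨hγ1, ?_⟩
  intro μ h₂ h₂pos hμ κ
  -- continuity at branch points
  have hcb : ∀ x : ℝ, x ∈ Ioo (0:ℝ) (1/2) ∨ x ∈ Ioi (1/2:ℝ) → ContinuousAt f x := by
    rintro x (h | h)
    · exact (hasDerivAt_LSV_left (α := α) h.1 h.2).continuousAt
    · exact (hasDerivAt_LSV_right (α := α) h).continuousAt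
  -- continuity of iterates at ζ
  have hcont : ∀ j, j ≤ p → ContinuousAt (f^[j]) ζ := by
    intro j
    induction j with
    | zero => intro _; simpa using continuousAt_id
    | succ n ih =>
      intro hn
      have h1 := ih (by omega)
      have h2 : ContinuousAt f (f^[n] ζ) := hcb _ (hbr n (by omega))
      rw [Function.iterate_succ']
      exact h2.comp h1
  -- tracking neighborhood
  have htrack : ∃ ε > (0:ℝ), ∀ x, |x - ζ| < ε → ∀ j, j < p →
      ((f^[j] x ∈ Ioo (0:ℝ) (1/2) ∧ f^[j] ζ ∈ Ioo (0:ℝ) (1/2)) ∨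
       (f^[j] x ∈ Ioi (1/2:ℝ) ∧ f^[j] ζ ∈ Ioi (1/2:ℝ))) := by
    have key : ∀ k, k ≤ p → ∃ ε > (0:ℝ), ∀ x, |x - ζ| < ε → ∀ j, j < k →
        ((f^[j] x ∈ Ioo (0:ℝ) (1/2) ∧ f^[j] ζ ∈ Ioo (0:ℝ) (1/2)) ∨
         (f^[j] x ∈ Ioi (1/2:ℝ) ∧ f^[j] ζ ∈ Ioi (1/2:ℝ))) := by
      intro k
      induction k with
      | zero => intro _; exact ⟨1, one_pos, fun x _ j hj => absurd hj (by omega)⟩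
      | succ k ih =>
        intro hk
        obtain ⟨ε₀, hε₀, H⟩ := ih (by omega)
        have hck := hcont k (by omega)
        have : ∃ ε₁ > (0:ℝ), ∀ x, |x - ζ| < ε₁ →
            ((f^[k] x ∈ Ioo (0:ℝ) (1/2) ∧ f^[k] ζ ∈ Ioo (0:ℝ) (1/2)) ∨
             (f^[k] x ∈ Ioi (1/2:ℝ) ∧ f^[k] ζ ∈ Ioi (1/2:ℝ))) := by
          rcases hbr k (by omega) with h | h
          · have hU : (f^[k]) ⁻¹' (Ioo (0:ℝ) (1/2)) ∈ nhds ζ :=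
              hck.preimage_mem_nhds (isOpen_Ioo.mem_nhds h)
            obtain ⟨ε₁, hε₁, hsub⟩ := Metric.mem_nhds_iff.1 hU
            exact ⟨ε₁, hε₁, fun x hx => Or.inl ⟨hsub (by simpa [Real.dist_eq] using hx), h⟩⟩
          · have hU : (f^[k]) ⁻¹' (Ioi (1/2:ℝ)) ∈ nhds ζ :=
              hck.preimage_mem_nhds (isOpen_Ioi.mem_nhds h)
            obtain ⟨ε₁, hε₁, hsub⟩ := Metric.mem_nhds_iff.1 hU
            exact ⟨ε₁, hε₁, fun x hx => Or.inr ⟨hsub (by simpa [Real.dist_eq] using hx), h⟩⟩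
        obtain ⟨ε₁, hε₁, H₁⟩ := this
        refine ⟨min ε₀ ε₁, lt_min hε₀ hε₁, fun x hx j hj => ?_⟩
        rcases Nat.lt_succ_iff_lt_or_eq.1 hj with h | h
        · exact H x (lt_of_lt_of_le hx (min_le_left _ _)) j h
        · subst h; exact H₁ x (lt_of_lt_of_le hx (min_le_right _ _))
    exact key p le_rfl
  obtain ⟨ε, hε, htr⟩ := htrack
  -- expansion of the iterates on the tracking neighborhood
  have hexp : ∀ x y, |x - ζ| < ε → |y - ζ| < ε → x ≤ y → ∀ n, n ≤ p →
      y - x ≤ f^[n] y - f^[n] x := by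
    intro x y hx hy hxy n
    induction n with
    | zero => intro _; simp
    | succ n ih =>
      intro hn
      have h1 := ih (by omega)
      rw [Function.iterate_succ_apply', Function.iterate_succ_apply']
      have huv : f^[n] x ≤ f^[n] y := by linarith
      rcases htr x hx n (by omega) with ⟨hxb, hzb⟩ | ⟨hxb, hzb⟩ <;>
        rcases htr y hy n (by omega) with ⟨hyb, hzb'⟩ | ⟨hyb, hzb'⟩
      · have e1 : f (f^[n] x) = f^[n] x * (1 + (2:ℝ)^α * (f^[n] x)^α) := by
          rw [hfdef]; simp only [LSV, if_pos (show (LSV α)^[n] x < 1/2 from hxb.2)]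
        have e2 : f (f^[n] y) = f^[n] y * (1 + (2:ℝ)^α * (f^[n] y)^α) := by
          rw [hfdef]; simp only [LSV, if_pos (show (LSV α)^[n] y < 1/2 from hyb.2)]
        rw [e1, e2]
        have := phi_expand (α := α) hα0 hxb.1.le huv
        linarith
      · exact absurd hzb.2 (not_lt.2 (le_of_lt hzb'))
      · exact absurd hzb'.2 (not_lt.2 (le_of_lt hzb))
      · have e1 : f (f^[n] x) = 2 * f^[n] x - 1 := by
          rw [hfdef]; simp only [LSV, if_neg (show ¬ (LSV α)^[n] x < 1/2 from not_lt.2 (le_of_lt (mem_Ioi.1 hxb)))]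
        have e2 : f (f^[n] y) = 2 * f^[n] y - 1 := by
          rw [hfdef]; simp only [LSV, if_neg (show ¬ (LSV α)^[n] y < 1/2 from not_lt.2 (le_of_lt (mem_Ioi.1 hyb)))]
        rw [e1, e2]; linarith
  -- continuity of f^[p] on the tracking neighborhood
  have hFc : ∀ x, |x - ζ| < ε → ContinuousAt (f^[p]) x := by
    intro x hx
    have : ∀ n, n ≤ p → ContinuousAt (f^[n]) x := by
      intro n
      induction n with
      | zero => intro _; simpa using continuousAt_id
      | succ n ih =>
        intro hn
        have h1 := ih (by omega)
        have h2 : ContinuousAt f (f^[n] x) := by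
          rcases htr x hx n (by omega) with ⟨h1', _⟩ | ⟨h1', _⟩
          · exact hcb _ (Or.inl h1')
          · exact hcb _ (Or.inr h1')
        rw [Function.iterate_succ']
        exact h2.comp h1
    exact this p le_rfl
  have hFd : HasDerivAt (f^[p]) γ ζ := by
    rw [hγ]; exact hFn p le_rfl
  have hiter : ∀ ℓ : ℕ, f^[ℓ * p] = (f^[p])^[ℓ] := fun ℓ => by
    rw [mul_comm, Function.iterate_mul]
  have hmain := main_tendsto (F := f^[p]) hε hγ1 hper
    (fun x y hx hy hxy => hexp x y hx hy hxy p le_rfl) hFc hFd μ h₂ h₂pos hμ κ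
  simpa only [hiter] using hmain
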